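/- Let A be a finite commutative unitary ring with A ≠ {0} and let x ∈ {−1,0,1} ⊆ A. Then there exists a positive integer k (one may take k = 3·|SL₂(A)| + 1) such that for every n ≥ k and every n-tuple (a₁,…,aₙ) ∈ Aⁿ there exist indices i ≥ 1 and j with 1 ≤ j and j + i − 1 ≤ n such that Kᵢ(a_j,…,a_{j+i−1}) = x. -/
import Mathlib


/-- The matrix `[[a, -1], [1, 0]]`. -/
def mMat {A : Type*} [CommRing A] (a : A) : Matrix (Fin 2) (Fin 2) A := !![a, -1; 1, 0]

/-- `M_n(a₁, …, aₙ) = mMat aₙ * ⋯ * mMat a₁`, for the tuple given as a list `[a₁, …, aₙ]`. -/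
def mProd {A : Type*} [CommRing A] (l : List A) : Matrix (Fin 2) (Fin 2) A :=
  ((l.map mMat).reverse).prod

/-- The sum `(a₁,…,aₙ) ⊕ (b₁,…,b_m) = (a₁+b_m, a₂,…,a_{n−1}, aₙ+b₁, b₂,…,b_{m−1})`. -/
def oplus {A : Type*} [CommRing A] (a b : List A) : List A :=
  (a.headD 0 + b.getLastD 0) ::
    (a.dropLast.tail ++ (a.getLastD 0 + b.headD 0) :: b.dropLast.tail)

/-- Two tuples are equivalent if one is a cyclic rotation of the other or of its reversal. -/
def TupEquiv {A : Type*} (a b : List A) : Prop :=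
  (∃ k, b = a.rotate k) ∨ (∃ k, b = a.reverse.rotate k)

/-- A λ-quiddity over `R ⊆ A`: all entries lie in `R` and `M_n(a₁,…,aₙ) = ± Id`. -/
def IsQuiddity {A : Type*} [CommRing A] (R : Set A) (c : List A) : Prop :=
  (∀ x ∈ c, x ∈ R) ∧ (mProd c = 1 ∨ mProd c = -1)

/-- A λ-quiddity `c` over `R` is reducible if `c ∼ a ⊕ b` with `a ∈ R^m`, `m ≥ 3`,
and `b` a λ-quiddity over `R` of size `l ≥ 3`. -/
def IsReducible {A : Type*} [CommRing A] (R : Set A) (c : List A) : Prop :=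
  ∃ a b : List A, 3 ≤ a.length ∧ 3 ≤ b.length ∧ (∀ x ∈ a, x ∈ R) ∧
    IsQuiddity R b ∧ TupEquiv c (oplus a b)

/-- An irreducible λ-quiddity over `R`: a λ-quiddity of size `≥ 3` which is not reducible. -/
def IrreducibleQuiddity {A : Type*} [CommRing A] (R : Set A) (c : List A) : Prop :=
  IsQuiddity R c ∧ 3 ≤ c.length ∧ ¬ IsReducible R c

/-- The continuant `K_i(a₁,…,a_i)`, determinant of the tridiagonal matrix with diagonal
`a₁,…,a_i` and off-diagonal entries `1`; `K₀ = 1`. -/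
def cont {A : Type*} [CommRing A] : List A → A
  | [] => 1
  | [a] => a
  | a :: b :: l => a * cont (b :: l) - cont l

set_option linter.unnecessarySeqFocus false
set_option maxHeartbeats 1000000

lemma mProd_cons {A : Type*} [CommRing A] (a : A) (l : List A) :
    mProd (a :: l) = mProd l * mMat a := by
  simp [mProd]

lemma mProd_entries {A : Type*} [CommRing A] (l : List A) :
    ∀ a b : A,
      mProd (a :: b :: l) =
        !![cont (a :: b :: l), -cont (b :: l);
           cont ((a :: b :: l).dropLast), -cont ((b :: l).dropLast)] := by
  induction l with
  | nil =>
    intro a b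
    rw [mProd_cons, mProd_cons]
    rw [show mProd ([] : List A) = 1 from rfl, one_mul]
    ext i j
    fin_cases i <;> fin_cases j <;>
      simp [mMat, cont, Matrix.mul_apply, Fin.sum_univ_two] <;> ring
  | cons c l ih =>
    intro a b
    rw [show (a :: b :: c :: l) = a :: (b :: c :: l) from rfl, mProd_cons, ih b c]
    ext i j
    fin_cases i <;> fin_cases j <;>
      simp [mMat, cont, Matrix.mul_apply, Fin.sum_univ_two] <;> ring

lemma mProd_entries' {A : Type*} [CommRing A] (l : List A) (hl : 2 ≤ l.length) :
    mProd l = !![cont l, -cont l.tail; cont l.dropLast, -cont l.tail.dropLast] := by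
  match l with
  | a :: b :: l => exact mProd_entries l a b

def mSL {A : Type*} [CommRing A] (a : A) : Matrix.SpecialLinearGroup (Fin 2) A :=
  ⟨mMat a, by simp [mMat, Matrix.det_fin_two_of]⟩

def sProd {A : Type*} [CommRing A] (l : List A) : Matrix.SpecialLinearGroup (Fin 2) A :=
  ((l.map mSL).reverse).prod

lemma sProd_append {A : Type*} [CommRing A] (l₁ l₂ : List A) :
    sProd (l₁ ++ l₂) = sProd l₂ * sProd l₁ := by
  simp [sProd]

lemma sProd_coe {A : Type*} [CommRing A] (l : List A) :
    (sProd l : Matrix (Fin 2) (Fin 2) A) = mProd l := by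
  induction l with
  | nil => rfl
  | cons a l ih =>
    have : sProd (a :: l) = sProd l * mSL a := by simp [sProd]
    rw [this, mProd_cons, ← ih]
    rfl

/-- Over a finite nontrivial commutative ring `A` and `x ∈ {−1,0,1}`, there is `k ≥ 1`
(namely `k = 3·|SL₂(A)| + 1`) such that every tuple of size `n ≥ k` admits a contiguous
subtuple `(a_j,…,a_{j+i−1})` whose continuant equals `x`. -/
theorem stmt18 {A : Type*} [CommRing A] [Fintype A] [Nontrivial A]
    (x : A) (hx : x = -1 ∨ x = 0 ∨ x = 1) :
    ∃ k : ℕ, 0 < k ∧ k = 3 * Nat.card (Matrix.SpecialLinearGroup (Fin 2) A) + 1 ∧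
      ∀ n : ℕ, k ≤ n → ∀ a : List A, a.length = n →
        ∃ i j : ℕ, 1 ≤ i ∧ 1 ≤ j ∧ j + i - 1 ≤ n ∧
          cont ((a.drop (j - 1)).take i) = x := by
  classical
  set G := Matrix.SpecialLinearGroup (Fin 2) A
  letI : Fintype G := Fintype.ofFinite G
  set N := Nat.card G with hN
  refine ⟨3 * N + 1, by positivity, rfl, ?_⟩
  intro n hn a ha
  -- pigeonhole on partial products
  have hcard : Fintype.card G * 3 < Fintype.card (Fin (n + 1)) := by
    rw [Fintype.card_fin, ← Nat.card_eq_fintype_card, ← hN]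
    omega
  obtain ⟨y, hy⟩ := Fintype.exists_lt_card_fiber_of_mul_lt_card
    (f := fun m : Fin (n + 1) => sProd (a.take m)) hcard
  -- extract two indices u < v with v - u ≥ 3 and equal partial products
  set s := (Finset.univ.filter fun m : Fin (n + 1) => sProd (a.take m) = y) with hs
  set t := s.image Fin.val with ht
  have hts : t.card = s.card := Finset.card_image_of_injective _ Fin.val_injective
  have htcard : 3 < t.card := by omega
  have htne : t.Nonempty := Finset.card_pos.mp (by omega)
  set u := t.min' htne
  set v := t.max' htne
  have hsub : t ⊆ Finset.Icc u v := fun m hm =>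
    Finset.mem_Icc.mpr ⟨t.min'_le m hm, t.le_max' m hm⟩
  have hIcc : t.card ≤ v + 1 - u := by
    have := Finset.card_le_card hsub
    rwa [Nat.card_Icc] at this
  have huv : u + 3 ≤ v := by omega
  have hu_mem := t.min'_mem htne
  have hv_mem := t.max'_mem htne
  have hval : ∀ m ∈ t, sProd (a.take m) = y ∧ m ≤ n := by
    intro m hm
    rw [ht, Finset.mem_image] at hm
    obtain ⟨m', hm', rfl⟩ := hm
    rw [hs, Finset.mem_filter] at hm'
    exact ⟨hm'.2, Nat.lt_succ_iff.mp m'.isLt⟩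
    
  obtain ⟨hu, -⟩ := hval u hu_mem
  obtain ⟨hv, hvn⟩ := hval v hv_mem
  clear_value u v
  clear hsub hIcc hu_mem hv_mem hval hy htcard htne hts ht hs
  -- the segment
  set L := v - u with hL
  set seg := (a.drop u).take L with hseg
  have hseglen : seg.length = L := by
    rw [hseg, List.length_take, List.length_drop, ha]
    omega
  have htake : a.take v = a.take u ++ seg := by
    rw [hseg, hL, ← List.take_add, Nat.add_sub_cancel' (by omega)]
  have hsprod : sProd seg = 1 := by
    have : sProd seg * sProd (a.take u) = sProd (a.take u) := by
      rw [← sProd_append, ← htake, hu, hv]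
    nth_rewrite 2 [← one_mul (sProd (a.take u))] at this
    exact mul_right_cancel this
  have hmprod : mProd seg = 1 := by
    rw [← sProd_coe, hsprod]
    simp
  have h3L : 3 ≤ L := by omega
  have hent := mProd_entries' seg (by omega)
  rw [hmprod] at hent
  have h00 : cont seg = 1 := by
    have := congrFun (congrFun hent 0) 0
    simpa using this.symm
  have h10 : cont seg.dropLast = 0 := by
    have := congrFun (congrFun hent 1) 0
    simpa using this.symm
  have h11 : cont seg.tail.dropLast = -1 := by
    have := congrFun (congrFun hent 1) 1
    have h := this.symm
    simp at h
    linear_combination -h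
  have hdropseg : seg.dropLast = (a.drop u).take (L - 1) := by
    rw [List.dropLast_eq_take, hseglen, hseg, List.take_take]
    congr 1
    omega
  have htailseg : seg.tail = (a.drop (u + 1)).take (L - 1) := by
    rw [hseg, ← List.drop_one, List.drop_take, List.drop_drop]
  have htaildropseg : seg.tail.dropLast = (a.drop (u + 1)).take (L - 2) := by
    rw [htailseg, List.dropLast_eq_take, List.length_take, List.take_take, List.length_drop, ha]
    congr 1
    omega
  rcases hx with rfl | rfl | rfl
  · -- x = -1
    refine ⟨L - 2, u + 2, by omega, by omega, by omega, ?_⟩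
    rw [show u + 2 - 1 = u + 1 from rfl, ← htaildropseg, h11]
  · -- x = 0
    refine ⟨L - 1, u + 1, by omega, by omega, by omega, ?_⟩
    rw [show u + 1 - 1 = u from rfl, ← hdropseg, h10]
  · -- x = 1
    refine ⟨L, u + 1, by omega, by omega, by omega, ?_⟩
    rw [show u + 1 - 1 = u from rfl, ← hseg, h00]
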